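/- Let Δ be a finite simple graph on vertex set V of size n. The number of proper set k-colorings of Δ satisfies χ^set_Δ(k) = ∑_{π ∈ Π(Δ)} μ(0̂,π) ∏_{B∈π} Fr(k,|B|), where Fr(k,r) = ∑_{j=0}^{k} C(k,j)^r, Π(Δ) is the lattice of connected partitions of Δ, and μ is its Möbius function. -/

import Mathlib

open scoped Classical

/-- A partition of the vertex set is connected when every block induces a connected
subgraph. -/
def ConnectedPartition {V : Type*} [Fintype V] [DecidableEq V] (G : SimpleGraph V)
    (π : Finpartition (Finset.univ : Finset V)) : Prop :=
  ∀ B ∈ π.parts, (G.induce (B : Set V)).Connected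

/-!
Group the set colorings `c` by their cardinality profile `g = (#(c v))_v`: a profile `g` is
realized by `∏ v, C(k, g v)` colorings, and `c` is proper exactly when `g` is a proper coloring.
Expanding `∏ B, Fr(k, |B|)` gives the total weight of the profiles constant on the blocks of `π`;
for a connected `π` this means that `π` refines the partition `π_g` into the components of the
subgraph of `g`-monochromatic edges, itself a connected partition. After swapping the sums, the
coefficient of `g` is `∑_{σ ≤ π_g} μ(0̂, σ)`, which is `1` if `π_g = 0̂`, i.e. if `g` is proper,
and `0` otherwise.
-/

open Finset Fintype

namespace Finpartition

variable {α : Type*} [Fintype α] [DecidableEq α]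

theorem ofSetoid_eq_bot_iff {s : Setoid α} [DecidableRel s.r] :
    ofSetoid s = ⊥ ↔ ∀ a b, s a b → a = b := by
  have part_bot (a : α) : (⊥ : Finpartition (univ : Finset α)).part a = {a} :=
    part_eq_of_mem _ (mem_bot_iff.2 ⟨a, mem_univ a, rfl⟩) (mem_singleton_self a)
  constructor
  · intro h a b hab
    have hb : b ∈ (ofSetoid s).part a := mem_part_ofSetoid_iff_rel.2 hab
    rw [h, part_bot, mem_singleton] at hb
    exact hb.symm
  · refine fun h ↦ le_antisymm (fun B hB ↦ ?_) bot_le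
    obtain ⟨a, -, rfl⟩ := (ofSetoid s).part_surjOn hB
    have : (ofSetoid s).part a = {a} := by
      ext b
      rw [mem_part_ofSetoid_iff_rel, mem_singleton]
      exact ⟨fun hab ↦ (h a b hab).symm, fun hba ↦ hba ▸ s.refl a⟩
    exact ⟨{a}, mem_bot_iff.2 ⟨a, mem_univ a, rfl⟩, this.le⟩

variable (π : Finpartition (univ : Finset α))

def partOf (a : α) : π.parts := ⟨π.part a, π.part_mem.2 (mem_univ a)⟩

theorem partOf_eq_of_mem {B : Finset α} (hB : B ∈ π.parts) {a : α} (ha : a ∈ B) :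
    π.partOf a = ⟨B, hB⟩ :=
  Subtype.ext (π.part_eq_of_mem hB ha)

theorem prod_parts_prod {M : Type*} [CommMonoid M] (F : π.parts → α → M) :
    ∏ B : π.parts, ∏ a ∈ B.1, F B a = ∏ a, F (π.partOf a) a := by
  rw [← prod_fiberwise univ π.partOf]
  refine prod_congr rfl fun B _ ↦ ?_
  have hfiber : ({a | π.partOf a = B} : Finset α) = B.1 := by
    ext a
    simp only [mem_filter, mem_univ, true_and, partOf, Subtype.ext_iff, π.part_eq_iff_mem B.2]
  rw [hfiber]
  exact prod_congr rfl fun a ha ↦ by rw [π.partOf_eq_of_mem B.2 ha]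

theorem prod_parts_sum_pow_card {ι R : Type*} [CommSemiring R] (t : Finset ι) (w : ι → R) :
    ∏ B ∈ π.parts, ∑ j ∈ t, w j ^ #B =
      ∑ g ∈ piFinset (fun _ : α ↦ t) with ∀ B ∈ π.parts, ∀ a ∈ B, ∀ b ∈ B, g a = g b,
        ∏ a, w (g a) := by
  rw [← prod_coe_sort, prod_univ_sum]
  simp_rw [← prod_const, prod_parts_prod]
  have hchoose (B : π.parts) : π.partOf (π.nonempty_of_mem_parts B.2).choose = B :=
    π.partOf_eq_of_mem B.2 (π.nonempty_of_mem_parts B.2).choose_spec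
  refine sum_nbij' (fun h a ↦ h (π.partOf a)) (fun g B ↦ g (π.nonempty_of_mem_parts B.2).choose)
    ?_ ?_ ?_ ?_ fun _ _ ↦ rfl
  · intro h hh
    simp only [mem_filter, mem_piFinset] at hh ⊢
    refine ⟨fun a ↦ hh _, fun B hB a ha b hb ↦ ?_⟩
    rw [π.partOf_eq_of_mem hB ha, π.partOf_eq_of_mem hB hb]
  · intro g hg
    simp only [mem_filter, mem_piFinset] at hg ⊢
    exact fun B ↦ hg.1 _
  · exact fun h _ ↦ funext fun B ↦ congrArg h (hchoose B)
  · intro g hg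
    simp only [mem_filter, mem_piFinset] at hg
    funext a
    exact hg.2 _ (π.partOf a).2 _ (π.nonempty_of_mem_parts (π.partOf a).2).choose_spec _
      (π.mem_part (mem_univ a))

end Finpartition

namespace SimpleGraph

variable {V α : Type*} (G : SimpleGraph V) (g : V → α)

def monochromatic : SimpleGraph V where
  Adj a b := G.Adj a b ∧ g a = g b
  symm := ⟨fun _ _ h ↦ ⟨h.1.symm, h.2.symm⟩⟩
  loopless := ⟨fun a h ↦ G.loopless.irrefl a h.1⟩

variable {G g}

theorem monochromatic_le : G.monochromatic g ≤ G := fun _ _ h ↦ h.1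

theorem Reachable.apply_eq_of_monochromatic {a b : V} (h : (G.monochromatic g).Reachable a b) :
    g a = g b := by
  obtain ⟨p⟩ := h
  induction p with
  | nil => rfl
  | cons hadj _ ih => exact hadj.2.trans ih

theorem induce_monochromatic_of_forall_eq {s : Set V} (h : ∀ a ∈ s, ∀ b ∈ s, g a = g b) :
    (G.monochromatic g).induce s = G.induce s := by
  ext a b
  simp only [comap_adj, Function.Embedding.subtype_apply, monochromatic, and_iff_left_iff_imp]
  exact fun _ ↦ h a a.2 b b.2

variable [Fintype V] [DecidableEq V]

variable (G g) in
noncomputable def monochromaticPartition : Finpartition (univ : Finset V) :=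
  Finpartition.ofSetoid (G.monochromatic g).reachableSetoid

theorem mem_part_monochromaticPartition {a b : V} :
    b ∈ (G.monochromaticPartition g).part a ↔ (G.monochromatic g).Reachable a b :=
  Finpartition.mem_part_ofSetoid_iff_rel

theorem coe_part_monochromaticPartition (a : V) :
    ((G.monochromaticPartition g).part a : Set V) =
      ((G.monochromatic g).connectedComponentMk a).supp := by
  ext b
  rw [mem_coe, mem_part_monochromaticPartition, ConnectedComponent.mem_supp_iff,
    ConnectedComponent.eq, reachable_comm]

theorem connectedPartition_monochromaticPartition :
    ConnectedPartition G (G.monochromaticPartition g) := by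
  intro B hB
  obtain ⟨a, -, rfl⟩ := (G.monochromaticPartition g).part_surjOn hB
  rw [coe_part_monochromaticPartition]
  exact (ConnectedComponent.maximal_connected_induce_supp _).1.mono
    (comap_monotone _ monochromatic_le)

theorem le_monochromaticPartition_iff {σ : Finpartition (univ : Finset V)}
    (hσ : ConnectedPartition G σ) :
    σ ≤ G.monochromaticPartition g ↔ ∀ B ∈ σ.parts, ∀ a ∈ B, ∀ b ∈ B, g a = g b := by
  constructor
  · intro hle B hB a ha b hb
    obtain ⟨C, hC, hBC⟩ := hle hB
    rw [← (G.monochromaticPartition g).part_eq_of_mem hC (hBC ha)] at hBC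
    exact (mem_part_monochromaticPartition.1 (hBC hb)).apply_eq_of_monochromatic
  · intro hconst B hB
    obtain ⟨a, ha⟩ := σ.nonempty_of_mem_parts hB
    refine ⟨_, (G.monochromaticPartition g).part_mem.2 (mem_univ a), fun b hb ↦ ?_⟩
    have hconn := hσ B hB
    rw [← induce_monochromatic_of_forall_eq (g := g) (hconst B hB)] at hconn
    exact mem_part_monochromaticPartition.2 <|
      (hconn.preconnected ⟨a, ha⟩ ⟨b, hb⟩).map (Embedding.induce _).toHom

theorem monochromaticPartition_eq_bot_iff :
    G.monochromaticPartition g = ⊥ ↔ ∀ a b, G.Adj a b → g a ≠ g b := by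
  rw [monochromaticPartition, Finpartition.ofSetoid_eq_bot_iff]
  constructor
  · exact fun h a b hab hg ↦ G.loopless.irrefl a (h a b (Adj.reachable ⟨hab, hg⟩) ▸ hab)
  · rintro h a b ⟨p⟩
    cases p with
    | nil => rfl
    | cons hadj _ => exact absurd hadj.2 (h _ _ hadj.1)

end SimpleGraph

theorem Finset.card_filter_comp_card_eq_sum {V α : Type*} [Fintype V] [DecidableEq V] [Fintype α]
    (P : (V → ℕ) → Prop) [DecidablePred P] :
    #{c : V → Finset α | P fun v ↦ #(c v)} =
      ∑ g ∈ piFinset fun _ : V ↦ range (Fintype.card α + 1),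
        if P g then ∏ v, (Fintype.card α).choose (g v) else 0 := by
  have hmaps : ((univ : Finset (V → Finset α)) : Set (V → Finset α)).MapsTo
      (fun c v ↦ #(c v)) (piFinset fun _ : V ↦ range (Fintype.card α + 1)) := fun c _ ↦ by
    simpa [Nat.lt_succ_iff] using fun v ↦ card_le_univ (c v)
  have hfiber (g : V → ℕ) :
      #{c : V → Finset α | (fun v ↦ #(c v)) = g} = ∏ v, (Fintype.card α).choose (g v) := by
    have : ({c : V → Finset α | (fun v ↦ #(c v)) = g} : Finset _) =
        piFinset fun v ↦ powersetCard (g v) univ := by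
      ext c
      simp [funext_iff, mem_powersetCard]
    rw [this, card_piFinset]
    simp_rw [card_powersetCard, card_univ]
  rw [card_filter, ← sum_fiberwise_of_maps_to hmaps]
  refine sum_congr rfl fun g _ ↦ ?_
  rw [sum_congr rfl fun c hc ↦ by rw [(mem_filter.1 hc).2], sum_const, ← hfiber]
  split_ifs <;> simp

/-- The number of proper set `k`-colorings of a finite simple graph equals the Möbius
inversion sum over connected partitions, with extended Franel numbers
`Fr(k,r) = ∑_j C(k,j)^r` on the blocks. -/
theorem stmt12 {V : Type*} [Fintype V] [DecidableEq V] (G : SimpleGraph V) (k : ℕ)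
    (μ : Finpartition (Finset.univ : Finset V) → ℤ)
    (hμ : ∀ π : Finpartition (Finset.univ : Finset V), ConnectedPartition G π →
      (∑ σ : Finpartition (Finset.univ : Finset V),
          if ConnectedPartition G σ ∧ σ ≤ π then μ σ else 0) =
        if π = ⊥ then 1 else 0) :
    (Nat.card {c : V → Finset (Fin k) //
        ∀ i j : V, G.Adj i j → (c i).card ≠ (c j).card} : ℤ) =
      ∑ π : Finpartition (Finset.univ : Finset V),
        if ConnectedPartition G π then
          μ π * ∏ B ∈ π.parts, ∑ j ∈ Finset.range (k + 1), ((k.choose j : ℤ)) ^ B.card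
        else 0 := by
  have hterm (π : Finpartition (univ : Finset V)) :
      (if ConnectedPartition G π then
          μ π * ∏ B ∈ π.parts, ∑ j ∈ range (k + 1), (k.choose j : ℤ) ^ #B else 0) =
        ∑ g ∈ piFinset fun _ : V ↦ range (k + 1),
          (if ConnectedPartition G π ∧ π ≤ G.monochromaticPartition g then μ π else 0) *
            ∏ v, (k.choose (g v) : ℤ) := by
    by_cases hπ : ConnectedPartition G π
    · simp only [hπ, if_true, true_and, SimpleGraph.le_monochromaticPartition_iff hπ,
        π.prod_parts_sum_pow_card, mul_sum, sum_filter, ite_mul, zero_mul, mul_ite, mul_zero]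
    · simp [hπ]
  rw [Nat.card_eq_fintype_card, Fintype.card_subtype,
    card_filter_comp_card_eq_sum fun g ↦ ∀ i j, G.Adj i j → g i ≠ g j, Fintype.card_fin]
  push_cast
  rw [sum_congr rfl fun π _ ↦ hterm π, sum_comm]
  refine sum_congr rfl fun g _ ↦ ?_
  rw [← sum_mul, hμ _ SimpleGraph.connectedPartition_monochromaticPartition, ite_mul, one_mul,
    zero_mul]
  exact if_congr SimpleGraph.monochromaticPartition_eq_bot_iff.symm rfl rfl
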